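/- Let φ ∈ C₋ and suppose g : ℚ_p^n \ {0} → ℂ is a function with the following property: for every x ∈ ℚ_p^n \ {0} there exists a compact open subgroup Λ₀ of (ℚ_p^n, +) such that g(x) = ∫_Λ ψ(ξ·x) φ(ξ) dμ(ξ) for every compact open subgroup Λ ⊇ Λ₀. Then for every ξ₀ ∈ ℚ_p^n \ {0}, the function x ↦ g(x)·(ψ(−(ξ₀·x)) − 1) is absolutely integrable on ℚ_p^n \ {0} with respect to μ, and ∫_{ℚ_p^n} g(x)·(ψ(−(ξ₀·x)) − 1) dμ(x) = φ(ξ₀). -/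

import Mathlib

open MeasureTheory
open scoped MatrixGroups

noncomputable section

/-- The action of `g ∈ GL_n(ℤ_p)` on `ℚ_p^n` by matrix multiplication. -/
def glAct (p : ℕ) [Fact p.Prime] (n : ℕ) (g : GL (Fin n) ℤ_[p]) (ξ : Fin n → ℚ_[p]) :
    Fin n → ℚ_[p] :=
  Matrix.mulVec (Matrix.of fun i j => (((g : Matrix (Fin n) (Fin n) ℤ_[p]) i j : ℚ_[p]))) ξ

/-- `φ` is `K`-finite for `K = GL_n(ℤ_p)`. -/
def KFinite (p : ℕ) [Fact p.Prime] (n : ℕ) (φ : (Fin n → ℚ_[p]) → ℂ) : Prop :=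
  FiniteDimensional ℂ
    (Submodule.span ℂ
      (Set.range fun g : GL (Fin n) ℤ_[p] =>
        fun ξ : Fin n → ℚ_[p] => φ (glAct p n g⁻¹ ξ)))

/-- `φ` is locally constant on `ℚ_p^n \ {0}`. -/
def LocConstOff0 (p : ℕ) [Fact p.Prime] (n : ℕ) (φ : (Fin n → ℚ_[p]) → ℂ) : Prop :=
  ∀ ξ : Fin n → ℚ_[p], ξ ≠ 0 → ∃ U ∈ nhds ξ, ∀ η ∈ U, φ η = φ ξ

/-- The space `C`, encoded as functions on `ℚ_p^n` vanishing at `0`. -/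
def Cspace (p : ℕ) [Fact p.Prime] (n : ℕ) : Set ((Fin n → ℚ_[p]) → ℂ) :=
  {φ | φ 0 = 0 ∧ LocConstOff0 p n φ ∧ KFinite p n φ}

/-- `C₋`: members of `C` supported away from `0`. -/
def Cminus (p : ℕ) [Fact p.Prime] (n : ℕ) : Set ((Fin n → ℚ_[p]) → ℂ) :=
  {φ ∈ Cspace p n | ∃ ε > (0 : ℝ), ∀ ξ : Fin n → ℚ_[p], ‖ξ‖ < ε → φ ξ = 0}

/-- `ψ` is an additive character of `ℚ_p`, trivial on `ℤ_p` but not on `p⁻¹ℤ_p`. -/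
def IsStdAddChar (p : ℕ) [Fact p.Prime] (ψ : ℚ_[p] → ℂ) : Prop :=
  (∀ a b : ℚ_[p], ψ (a + b) = ψ a * ψ b) ∧
  (∀ a : ℚ_[p], ‖ψ a‖ = 1) ∧
  (∀ z : ℚ_[p], ‖z‖ ≤ 1 → ψ z = 1) ∧
  (∃ y : ℚ_[p], ‖y‖ = (p : ℝ) ∧ ψ y ≠ 1)

/-!
`K`-finiteness makes `φ` invariant under a small congruence subgroup of `GL_n(ℤ_p)`, and such a
subgroup moves each `ξ ≠ 0` through the whole ball `ξ + B(0, δ‖ξ‖)`: `φ` is constant on these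
relative balls. Translating by a vector `a` with `ψ(a·x) ≠ 1` then kills the integral of
`ψ(ξ·x) φ(ξ)` over every annulus `R < ‖ξ‖ ≤ R'` with `p ≤ δ R ‖x‖`. Hence the integrals over the
balls `B(0, R)` stabilise, `g` agrees with one of them, `G_K`, wherever `ψ(-ξ₀·x) ≠ 1`, and `G_K`
has compact support because `φ` vanishes near `0`. Finally, by Fubini and
`∫_{B(0,p^k)} ψ(η·x) dx = μ(B(0,p^k)) 𝟙_{B(0,p^{-k})}(η)`, the integral of
`G_K(x) (ψ(-ξ₀·x) - 1)` is `μ(B(0,p^k)) μ(B(0,p^{-k})) φ(ξ₀) = φ(ξ₀)`.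
-/

open Metric Filter Topology
open scoped Matrix

namespace IsStdAddChar

variable {p : ℕ} [Fact p.Prime] {ψ : ℚ_[p] → ℂ}

lemma map_add (hψ : IsStdAddChar p ψ) (a b : ℚ_[p]) : ψ (a + b) = ψ a * ψ b := hψ.1 a b

lemma map_eq_one (hψ : IsStdAddChar p ψ) {z : ℚ_[p]} (hz : ‖z‖ ≤ 1) : ψ z = 1 := hψ.2.2.1 z hz

lemma map_add_eq_self (hψ : IsStdAddChar p ψ) (a : ℚ_[p]) {z : ℚ_[p]} (hz : ‖z‖ ≤ 1) :
    ψ (a + z) = ψ a := by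
  rw [hψ.map_add, hψ.map_eq_one hz, mul_one]

lemma isLocallyConstant (hψ : IsStdAddChar p ψ) : IsLocallyConstant ψ :=
  (IsLocallyConstant.iff_eventually_eq ψ).2 fun a => by
    filter_upwards [closedBall_mem_nhds a one_pos] with b hb
    simpa using hψ.map_add_eq_self a (z := b - a) (by rwa [← dist_eq_norm])

lemma continuous (hψ : IsStdAddChar p ψ) : Continuous ψ := hψ.isLocallyConstant.continuous

end IsStdAddChar

section Ultrametric

lemma norm_dotProduct_le {ι R : Type*} [Fintype ι] [NormedRing R] [IsUltrametricDist R]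
    (ξ x : ι → R) : ‖ξ ⬝ᵥ x‖ ≤ ‖ξ‖ * ‖x‖ :=
  IsUltrametricDist.norm_sum_le_of_forall_le_of_nonneg (by positivity) fun i _ =>
    (norm_mul_le _ _).trans <|
      mul_le_mul (norm_le_pi_norm ξ i) (norm_le_pi_norm x i) (norm_nonneg _) (norm_nonneg _)

lemma exists_norm_eq_norm_apply {ι E : Type*} [Fintype ι] [Nonempty ι] [SeminormedAddGroup E]
    (x : ι → E) : ∃ i, ‖x‖ = ‖x i‖ := by
  obtain ⟨i, -, hi⟩ := Finset.exists_mem_eq_sup Finset.univ Finset.univ_nonempty (‖x ·‖₊)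
  exact ⟨i, congrArg NNReal.toReal ((Pi.nnnorm_def x).trans hi)⟩

lemma exists_dotProduct_eq {ι 𝕜 : Type*} [Fintype ι] [DecidableEq ι] [NormedField 𝕜]
    {x : ι → 𝕜} (hx : x ≠ 0) (y : 𝕜) : ∃ a : ι → 𝕜, a ⬝ᵥ x = y ∧ ‖a‖ = ‖y‖ / ‖x‖ := by
  obtain ⟨j, hj⟩ := Function.ne_iff.1 hx
  have : Nonempty ι := ⟨j⟩
  obtain ⟨i, hi⟩ := exists_norm_eq_norm_apply x
  have hxi : x i ≠ 0 := norm_ne_zero_iff.1 (hi ▸ norm_ne_zero_iff.2 hx)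
  refine ⟨Pi.single i (y / x i), ?_, ?_⟩
  · rw [single_dotProduct, div_mul_cancel₀ _ hxi]
  · rw [Pi.norm_single, norm_div, hi]

lemma IsUltrametricDist.preimage_add_closedBall_zero {E : Type*} [SeminormedAddCommGroup E]
    [IsUltrametricDist E] {a : E} {r : ℝ} (ha : ‖a‖ ≤ r) :
    (a + ·) ⁻¹' closedBall 0 r = closedBall 0 r := by
  rw [preimage_add_closedBall, zero_sub]
  exact IsUltrametricDist.closedBall_eq_of_mem (by simpa using ha)

end Ultrametric

lemma Padic.zpow_add_one_le_norm_of_lt {p : ℕ} [Fact p.Prime] {z : ℚ_[p]} {k : ℤ}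
    (h : (p : ℝ) ^ k < ‖z‖) : (p : ℝ) ^ (k + 1) ≤ ‖z‖ := by
  have hp : (1 : ℝ) < p := Nat.one_lt_cast.2 (Fact.out : p.Prime).one_lt
  have hz : z ≠ 0 := norm_pos_iff.1 ((zpow_pos (zero_lt_one.trans hp) k).trans h)
  rw [Padic.norm_eq_zpow_neg_valuation hz] at h ⊢
  exact zpow_le_zpow_right₀ hp.le ((zpow_lt_zpow_iff_right₀ hp).1 h)

lemma Padic.zpow_add_one_le_pi_norm_of_lt {p : ℕ} [Fact p.Prime] {ι : Type*} [Fintype ι]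
    {x : ι → ℚ_[p]} {k : ℤ} (h : (p : ℝ) ^ k < ‖x‖) : (p : ℝ) ^ (k + 1) ≤ ‖x‖ := by
  have hx : x ≠ 0 := norm_pos_iff.1 ((zpow_nonneg (Nat.cast_nonneg p) k).trans_lt h)
  have : Nonempty ι := ⟨(Function.ne_iff.1 hx).choose⟩
  obtain ⟨i, hi⟩ := exists_norm_eq_norm_apply x
  rw [hi] at h ⊢
  exact Padic.zpow_add_one_le_norm_of_lt h

section Translation

variable {G : Type*} [MeasurableSpace G] [AddGroup G] [MeasurableAdd G]
  {μ : Measure G} [μ.IsAddLeftInvariant]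

theorem setIntegral_eq_zero_of_map_add_eq_mul {s : Set G} (hs : MeasurableSet s) {a : G}
    (has : (a + ·) ⁻¹' s = s) {f : G → ℂ} {c : ℂ} (hc : c ≠ 1)
    (hf : ∀ x ∈ s, f (a + x) = c * f x) : ∫ x in s, f x ∂μ = 0 := by
  have h : ∫ x in s, f x ∂μ = c * ∫ x in s, f x ∂μ := calc
    ∫ x in s, f x ∂μ = ∫ x in (a + ·) ⁻¹' s, f (a + x) ∂μ :=
      ((measurePreserving_add_left μ a).setIntegral_preimage_emb
        (measurableEmbedding_addLeft a) f s).symm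
    _ = ∫ x in s, c * f x ∂μ := by rw [has]; exact setIntegral_congr_fun hs hf
    _ = c * ∫ x in s, f x ∂μ := integral_const_mul c _
  have : (1 - c) * ∫ x in s, f x ∂μ = 0 := by rw [sub_mul, one_mul, ← h, sub_self]
  exact (mul_eq_zero.1 this).resolve_left (sub_ne_zero.2 hc.symm)

end Translation

namespace IsStdAddChar

variable {p : ℕ} [Fact p.Prime] {n : ℕ} {ψ : ℚ_[p] → ℂ}

lemma exists_map_dotProduct_ne_one (hψ : IsStdAddChar p ψ) {x : Fin n → ℚ_[p]} (hx : x ≠ 0) :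
    ∃ a, ψ (a ⬝ᵥ x) ≠ 1 ∧ ‖a‖ = p / ‖x‖ := by
  obtain ⟨y, hy, hψy⟩ := hψ.2.2.2
  obtain ⟨a, ha, hna⟩ := exists_dotProduct_eq hx y
  exact ⟨a, ha ▸ hψy, hy ▸ hna⟩

variable [MeasurableSpace ℚ_[p]] [BorelSpace ℚ_[p]] {μ : Measure (Fin n → ℚ_[p])}

lemma setIntegral_closedBall_eq_zero [μ.IsAddLeftInvariant] (hψ : IsStdAddChar p ψ)
    {η : Fin n → ℚ_[p]} {R : ℝ} (hR : p ≤ R * ‖η‖) :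
    ∫ x in closedBall 0 R, ψ (η ⬝ᵥ x) ∂μ = 0 := by
  have hη : η ≠ 0 := by
    rintro rfl
    simp only [norm_zero, mul_zero, Nat.cast_nonpos] at hR
    exact (Fact.out : p.Prime).ne_zero hR
  obtain ⟨a, ha, hna⟩ := hψ.exists_map_dotProduct_ne_one hη
  refine setIntegral_eq_zero_of_map_add_eq_mul (a := a) measurableSet_closedBall
    (IsUltrametricDist.preimage_add_closedBall_zero ?_) ha fun x _ => ?_
  · rwa [hna, div_le_iff₀ (norm_pos_iff.2 hη)]
  · rw [dotProduct_add, hψ.map_add, dotProduct_comm]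

lemma setIntegral_closedBall_eq_measureReal (hψ : IsStdAddChar p ψ) {η : Fin n → ℚ_[p]}
    {R : ℝ} (hR : R * ‖η‖ ≤ 1) :
    ∫ x in closedBall 0 R, ψ (η ⬝ᵥ x) ∂μ = μ.real (closedBall 0 R) := by
  have h1 : ∀ x ∈ closedBall (0 : Fin n → ℚ_[p]) R, ψ (η ⬝ᵥ x) = 1 := fun x hx =>
    hψ.map_eq_one <| (norm_dotProduct_le η x).trans <| by
      rw [mem_closedBall_zero_iff] at hx
      nlinarith [norm_nonneg η]
  rw [setIntegral_congr_fun measurableSet_closedBall h1, setIntegral_const, Complex.real_smul,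
    mul_one]

lemma setIntegral_closedBall_zpow [μ.IsAddLeftInvariant] (hψ : IsStdAddChar p ψ)
    (η : Fin n → ℚ_[p]) (k : ℤ) :
    ∫ x in closedBall 0 ((p : ℝ) ^ k), ψ (η ⬝ᵥ x) ∂μ =
      (closedBall 0 ((p : ℝ) ^ (-k))).indicator
        (fun _ => (μ.real (closedBall 0 ((p : ℝ) ^ k)) : ℂ)) η := by
  have hp : (0 : ℝ) < p := by exact_mod_cast (Fact.out : p.Prime).pos
  by_cases hη : η ∈ closedBall 0 ((p : ℝ) ^ (-k))
  · rw [Set.indicator_of_mem hη]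
    refine hψ.setIntegral_closedBall_eq_measureReal ?_
    rw [mem_closedBall_zero_iff] at hη
    calc (p : ℝ) ^ k * ‖η‖ ≤ (p : ℝ) ^ k * (p : ℝ) ^ (-k) := by gcongr
      _ = 1 := by rw [← zpow_add₀ hp.ne', add_neg_cancel, zpow_zero]
  · rw [Set.indicator_of_notMem hη]
    refine hψ.setIntegral_closedBall_eq_zero ?_
    rw [mem_closedBall_zero_iff, not_le] at hη
    calc (p : ℝ) = (p : ℝ) ^ k * (p : ℝ) ^ (-k + 1) := by
          rw [← zpow_add₀ hp.ne', add_neg_cancel_left, zpow_one]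
      _ ≤ (p : ℝ) ^ k * ‖η‖ := by gcongr; exact Padic.zpow_add_one_le_pi_norm_of_lt hη

end IsStdAddChar

section HaarMeasure

open scoped ENNReal NNReal Pointwise

variable {p : ℕ} [Fact p.Prime] {n : ℕ} [MeasurableSpace ℚ_[p]] [BorelSpace ℚ_[p]]
  {μ : Measure (Fin n → ℚ_[p])} [μ.IsAddHaarMeasure]

/-- The two balls are `u • B(0, 1)` and `u⁻¹ • B(0, 1)` for `u = p^{-k}`, and
`distribHaarChar` is multiplicative. -/
lemma measureReal_closedBall_zpow_mul_neg (hμ : μ (closedBall 0 1) = 1) (k : ℤ) :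
    μ.real (closedBall 0 ((p : ℝ) ^ k)) * μ.real (closedBall 0 ((p : ℝ) ^ (-k))) = 1 := by
  have hp : (p : ℚ_[p]) ≠ 0 := by exact_mod_cast (Fact.out : p.Prime).ne_zero
  set u : ℚ_[p]ˣ := Units.mk0 _ (zpow_ne_zero (-k) hp)
  have hball : ∀ v : ℚ_[p]ˣ,
      μ (closedBall 0 ‖(v : ℚ_[p])‖) = distribHaarChar (Fin n → ℚ_[p]) v := fun v => by
    rw [← mul_one (distribHaarChar _ v : ℝ≥0∞), ← hμ, distribHaarChar_mul μ v]
    change _ = μ ((v : ℚ_[p]) • _)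
    rw [_root_.smul_closedBall _ _ zero_le_one, smul_zero, mul_one]
  have h1 : ‖(u : ℚ_[p])‖ = (p : ℝ) ^ k := by simp [u]
  have h2 : ‖((u⁻¹ : ℚ_[p]ˣ) : ℚ_[p])‖ = (p : ℝ) ^ (-k) := by simp [u]
  rw [measureReal_def, measureReal_def, ← h1, ← h2, hball, hball, ← ENNReal.toReal_mul,
    ← ENNReal.coe_mul, ← map_mul, mul_inv_cancel, map_one, ENNReal.coe_one, ENNReal.toReal_one]

end HaarMeasure

def ConstantOnRelativeBalls {E : Type*} [SeminormedAddGroup E] (δ : ℝ) (φ : E → ℂ) : Prop :=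
  ∀ ξ η : E, ‖η‖ ≤ δ * ‖ξ‖ → φ (ξ + η) = φ ξ

section PartialFourier

variable {p : ℕ} [Fact p.Prime] {n : ℕ} [MeasurableSpace ℚ_[p]]

def partialFourier (μ : Measure (Fin n → ℚ_[p])) (ψ : ℚ_[p] → ℂ) (φ : (Fin n → ℚ_[p]) → ℂ)
    (R : ℝ) (x : Fin n → ℚ_[p]) : ℂ :=
  ∫ ξ in closedBall 0 R, ψ (ξ ⬝ᵥ x) * φ ξ ∂μ

def IsFourierLimit (μ : Measure (Fin n → ℚ_[p])) (ψ : ℚ_[p] → ℂ) (φ : (Fin n → ℚ_[p]) → ℂ)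
    (g : (Fin n → ℚ_[p]) → ℂ) : Prop :=
  ∀ x : Fin n → ℚ_[p], x ≠ 0 →
    ∃ Λ₀ : AddSubgroup (Fin n → ℚ_[p]),
      IsCompact (Λ₀ : Set (Fin n → ℚ_[p])) ∧ IsOpen (Λ₀ : Set (Fin n → ℚ_[p])) ∧
      ∀ Λ : AddSubgroup (Fin n → ℚ_[p]),
        IsCompact (Λ : Set (Fin n → ℚ_[p])) → IsOpen (Λ : Set (Fin n → ℚ_[p])) → Λ₀ ≤ Λ →
          g x = ∫ ξ in (Λ : Set (Fin n → ℚ_[p])), ψ (∑ i, ξ i * x i) * φ ξ ∂μ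

variable {μ : Measure (Fin n → ℚ_[p])} {ψ : ℚ_[p] → ℂ} {φ : (Fin n → ℚ_[p]) → ℂ}

lemma IsFourierLimit.eventually_eq_partialFourier {g : (Fin n → ℚ_[p]) → ℂ}
    (hg : IsFourierLimit μ ψ φ g) {x : Fin n → ℚ_[p]} (hx : x ≠ 0) :
    ∀ᶠ R in atTop, g x = partialFourier μ ψ φ R x := by
  obtain ⟨Λ₀, hΛ₀, -, hΛ⟩ := hg x hx
  obtain ⟨r, hr⟩ := hΛ₀.isBounded.subset_closedBall 0
  filter_upwards [eventually_gt_atTop (max r 0)] with R hR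
  have hR₀ : 0 < R := (le_max_right r 0).trans_lt hR
  exact hΛ (IsUltrametricDist.closedBall_openAddSubgroup _ hR₀).toAddSubgroup
    (isCompact_closedBall 0 R) (IsUltrametricDist.isOpen_closedBall 0 hR₀.ne')
    (hr.trans (closedBall_subset_closedBall ((le_max_left r 0).trans hR.le)))

lemma partialFourier_mul_char_sub_one (hψ : IsStdAddChar p ψ) (K : ℝ)
    (ξ₀ x : Fin n → ℚ_[p]) :
    partialFourier μ ψ φ K x * (ψ (-(ξ₀ ⬝ᵥ x)) - 1) =
      ∫ ξ in closedBall 0 K, (ψ ((ξ - ξ₀) ⬝ᵥ x) - ψ (ξ ⬝ᵥ x)) * φ ξ ∂μ := by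
  rw [partialFourier, ← integral_mul_const]
  congr 1 with ξ
  rw [sub_dotProduct, sub_eq_add_neg _ (ξ₀ ⬝ᵥ x), hψ.map_add]
  ring

variable [BorelSpace ℚ_[p]] [μ.IsAddHaarMeasure]

lemma continuous_partialFourier (hψ : IsStdAddChar p ψ) (hφ : Continuous φ) (R : ℝ) :
    Continuous (partialFourier μ ψ φ R) :=
  continuous_parametric_integral_of_continuous
    ((hψ.continuous.comp (continuous_snd.dotProduct continuous_fst)).mul
      (hφ.comp continuous_snd)) (isCompact_closedBall 0 R)

lemma integrableOn_closedBall_char_mul (hψ : IsStdAddChar p ψ) (hφ : Continuous φ)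
    (x : Fin n → ℚ_[p]) (R : ℝ) :
    IntegrableOn (fun ξ => ψ (ξ ⬝ᵥ x) * φ ξ) (closedBall 0 R) μ :=
  ((hψ.continuous.comp (continuous_id.dotProduct continuous_const)).mul hφ).continuousOn
    |>.integrableOn_compact (isCompact_closedBall 0 R)

/-- On the annulus `R < ‖ξ‖ ≤ R'`, translating by a vector `a` with `‖a‖ = p / ‖x‖ ≤ δ R` fixes
both the annulus and `φ`, but multiplies `ψ(ξ · x)` by `ψ(a · x) ≠ 1`. -/
lemma setIntegral_annulus_char_mul_eq_zero (hψ : IsStdAddChar p ψ) {δ : ℝ} (hδ₀ : 0 < δ)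
    (hδ₁ : δ ≤ 1) (hφ : ConstantOnRelativeBalls δ φ) {x : Fin n → ℚ_[p]} {R R' : ℝ}
    (hRR' : R ≤ R') (hR : p ≤ δ * R * ‖x‖) :
    ∫ ξ in closedBall 0 R' \ closedBall 0 R, ψ (ξ ⬝ᵥ x) * φ ξ ∂μ = 0 := by
  have hx : x ≠ 0 := by
    rintro rfl
    simp only [norm_zero, mul_zero, Nat.cast_nonpos] at hR
    exact (Fact.out : p.Prime).ne_zero hR
  obtain ⟨a, ha, hna⟩ := hψ.exists_map_dotProduct_ne_one hx
  have haR : ‖a‖ ≤ δ * R := by rwa [hna, div_le_iff₀ (norm_pos_iff.2 hx)]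
  have hR₀ : 0 ≤ R := nonneg_of_mul_nonneg_right ((norm_nonneg a).trans haR) hδ₀
  have haR' : ‖a‖ ≤ R := haR.trans (mul_le_of_le_one_left hR₀ hδ₁)
  refine setIntegral_eq_zero_of_map_add_eq_mul (a := a)
    (measurableSet_closedBall.diff measurableSet_closedBall) ?_ ha fun ξ hξ => ?_
  · rw [Set.preimage_sdiff, IsUltrametricDist.preimage_add_closedBall_zero (haR'.trans hRR'),
      IsUltrametricDist.preimage_add_closedBall_zero haR']
  · have hξR : R < ‖ξ‖ := by simpa using hξ.2
    rw [add_comm a ξ, hφ ξ a (haR.trans (by gcongr)), add_dotProduct, hψ.map_add]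
    ring

lemma partialFourier_eq_of_le (hψ : IsStdAddChar p ψ) (hφc : Continuous φ) {δ : ℝ}
    (hδ₀ : 0 < δ) (hδ₁ : δ ≤ 1) (hφ : ConstantOnRelativeBalls δ φ) {x : Fin n → ℚ_[p]}
    {R R' : ℝ} (hRR' : R ≤ R') (hR : p ≤ δ * R * ‖x‖) :
    partialFourier μ ψ φ R' x = partialFourier μ ψ φ R x := by
  rw [partialFourier, ← Set.union_sdiff_cancel (closedBall_subset_closedBall hRR'),
    setIntegral_union Set.disjoint_sdiff_right
      (measurableSet_closedBall.diff measurableSet_closedBall)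
      (integrableOn_closedBall_char_mul hψ hφc x R)
      ((integrableOn_closedBall_char_mul hψ hφc x R').mono_set Set.sdiff_subset),
    setIntegral_annulus_char_mul_eq_zero hψ hδ₀ hδ₁ hφ hRR' hR, add_zero, partialFourier]

lemma partialFourier_eq_zero (hψ : IsStdAddChar p ψ) (hφc : Continuous φ) {δ : ℝ}
    (hδ₀ : 0 < δ) (hδ₁ : δ ≤ 1) (hφ : ConstantOnRelativeBalls δ φ) {s R : ℝ}
    (hφs : ∀ ξ ∈ closedBall 0 s, φ ξ = 0) (hsR : s ≤ R) {x : Fin n → ℚ_[p]}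
    (hx : p ≤ δ * s * ‖x‖) : partialFourier μ ψ φ R x = 0 := by
  rw [partialFourier_eq_of_le hψ hφc hδ₀ hδ₁ hφ hsR hx, partialFourier,
    setIntegral_congr_fun measurableSet_closedBall fun ξ hξ => by rw [hφs ξ hξ, mul_zero],
    integral_zero]

end PartialFourier

theorem Submodule.exists_finset_forall_eval_eq_zero {X 𝕜 : Type*} [Field 𝕜]
    (V : Submodule 𝕜 (X → 𝕜)) [FiniteDimensional 𝕜 V] :
    ∃ T : Finset X, ∀ w ∈ V, (∀ x ∈ T, w x = 0) → w = 0 := by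
  classical
  let W : Finset X → Submodule 𝕜 V := fun T =>
    ⨅ x ∈ T, LinearMap.ker ((LinearMap.proj x).comp V.subtype)
  have hW : ∀ T w, w ∈ W T ↔ ∀ x ∈ T, (w : X → 𝕜) x = 0 := by
    simp [W, Submodule.mem_iInf]
  obtain ⟨_, ⟨T, rfl⟩, hT⟩ := IsArtinian.set_has_minimal (Set.range W) (Set.range_nonempty W)
  refine ⟨T, fun w hw hwT => ?_⟩
  by_contra hw0
  obtain ⟨x, hx⟩ := Function.ne_iff.1 hw0
  refine hT _ ⟨insert x T, rfl⟩ (lt_of_le_of_ne ?_ fun h => hx ?_)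
  · exact fun v hv => (hW _ v).2 fun y hy => (hW _ v).1 hv y (Finset.mem_insert_of_mem hy)
  · have : (⟨w, hw⟩ : V) ∈ W (insert x T) := h ▸ (hW T _).2 hwT
    exact (hW _ _).1 this x (Finset.mem_insert_self x T)

lemma norm_mulVec_le_of_forall_norm_le {ι κ R : Type*} [Fintype κ] [NormedRing R]
    [IsUltrametricDist R] {A : Matrix ι κ R} {δ : ℝ} (hδ : 0 ≤ δ) (hA : ∀ i j, ‖A i j‖ ≤ δ)
    (ξ : κ → R) (i : ι) : ‖(A *ᵥ ξ) i‖ ≤ δ * ‖ξ‖ :=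
  (norm_dotProduct_le (A i) ξ).trans <| by gcongr; exact (pi_norm_le_iff_of_nonneg hδ).2 (hA i)

section GLAction

variable {p : ℕ} [Fact p.Prime] {n : ℕ}

/-- For `δ = p^{-m}` these `g` form the principal congruence subgroup of level `m`. -/
def IsNearOne (δ : ℝ) (g : GL (Fin n) ℤ_[p]) : Prop :=
  ∀ i j, ‖((g : Matrix (Fin n) (Fin n) ℤ_[p]) - 1) i j‖ ≤ δ

lemma glAct_sub_self (g : GL (Fin n) ℤ_[p]) (ξ : Fin n → ℚ_[p]) :
    glAct p n g ξ - ξ =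
      PadicInt.Coe.ringHom.mapMatrix ((g : Matrix (Fin n) (Fin n) ℤ_[p]) - 1) *ᵥ ξ := by
  rw [map_sub, map_one, Matrix.sub_mulVec, Matrix.one_mulVec]
  rfl

lemma glAct_one (ξ : Fin n → ℚ_[p]) : glAct p n 1 ξ = ξ := by
  rw [← sub_eq_zero, glAct_sub_self]
  simp

lemma norm_glAct_sub_self_le {g : GL (Fin n) ℤ_[p]} {δ : ℝ} (hδ : 0 ≤ δ)
    (hg : IsNearOne δ g) (ξ : Fin n → ℚ_[p]) :
    ‖glAct p n g ξ - ξ‖ ≤ δ * ‖ξ‖ := by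
  rw [glAct_sub_self, pi_norm_le_iff_of_nonneg (by positivity)]
  exact norm_mulVec_le_of_forall_norm_le hδ
    (fun i j => PadicInt.norm_def.symm.trans_le (hg i j)) ξ

/-- A relative translation `ξ ↦ ξ + η` with `‖η‖ ≤ δ ‖ξ‖` is realised by the element
`1 + u vᵀ` of the congruence subgroup, with `v = eᵢ` for a coordinate `i` where `ξ` is largest
and `u = η / ξᵢ`; its determinant `1 + uᵢ` is a unit since `‖uᵢ‖ < 1`. -/
lemma exists_glAct_eq_add {ξ η : Fin n → ℚ_[p]} (hξ : ξ ≠ 0) {δ : ℝ} (hδ₁ : δ < 1)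
    (hη : ‖η‖ ≤ δ * ‖ξ‖) :
    ∃ g : GL (Fin n) ℤ_[p], IsNearOne δ g ∧
      glAct p n g ξ = ξ + η := by
  classical
  obtain ⟨j₀, -⟩ := Function.ne_iff.1 hξ
  have : Nonempty (Fin n) := ⟨j₀⟩
  obtain ⟨i, hi⟩ := exists_norm_eq_norm_apply ξ
  have hξi : 0 < ‖ξ i‖ := hi ▸ norm_pos_iff.2 hξ
  have hu : ∀ j, ‖η j / ξ i‖ ≤ δ := fun j => by
    rw [norm_div, div_le_iff₀ hξi, ← hi]
    exact (norm_le_pi_norm η j).trans hη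
  let u : Fin n → ℤ_[p] := fun j => ⟨η j / ξ i, (hu j).trans hδ₁.le⟩
  let v : Fin n → ℤ_[p] := Pi.single i 1
  have hu' : ∀ j, ‖u j‖ ≤ δ := hu
  have hdet : IsUnit (1 + Matrix.vecMulVec u v).det := by
    rw [Matrix.vecMulVec_eq Unit, Matrix.det_one_add_replicateCol_mul_replicateRow,
      PadicInt.isUnit_iff, single_dotProduct, one_mul,
      IsUltrametricDist.norm_add_eq_max_of_norm_ne_norm, norm_one]
    · exact max_eq_left ((hu' i).trans hδ₁.le)
    · exact norm_one (α := ℤ_[p]) ▸ ((hu' i).trans_lt hδ₁).ne'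
  refine ⟨Matrix.nonsingInvUnit _ hdet, fun j l => ?_, ?_⟩
  · change ‖(1 + Matrix.vecMulVec u v - 1) j l‖ ≤ δ
    rw [add_sub_cancel_left, Matrix.vecMulVec_apply, norm_mul]
    exact (mul_le_of_le_one_right (norm_nonneg _) (PadicInt.norm_le_one _)).trans (hu' j)
  · rw [← sub_eq_iff_eq_add', glAct_sub_self]
    change PadicInt.Coe.ringHom.mapMatrix (1 + Matrix.vecMulVec u v - 1) *ᵥ ξ = η
    ext j
    simp only [add_sub_cancel_left, Matrix.mulVec, dotProduct, RingHom.mapMatrix_apply,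
      Matrix.map_apply, Matrix.vecMulVec_apply, map_mul, mul_assoc, ← Finset.mul_sum]
    simp only [v, Pi.single_apply, apply_ite, map_one, map_zero, ite_mul, one_mul, zero_mul,
      Finset.sum_ite_eq', Finset.mem_univ, if_true]
    exact div_mul_cancel₀ (η j) (norm_pos_iff.1 hξi)

end GLAction

section KFinite

variable {p : ℕ} [Fact p.Prime] {n : ℕ} {φ : (Fin n → ℚ_[p]) → ℂ}

/-- `φ ∘ g - φ` lies in the finite-dimensional span of the translates of `φ`, so it vanishes once
it vanishes on a finite set of points; there `φ` is locally constant, and `g ξ` is close to `ξ`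
when `g` is close to `1`. -/
lemma KFinite.eventually_forall_glAct_eq (hfin : KFinite p n φ) (hφ : IsLocallyConstant φ) :
    ∀ᶠ δ in 𝓝[>] (0 : ℝ), ∀ g : GL (Fin n) ℤ_[p], IsNearOne δ g → ∀ ξ, φ (glAct p n g ξ) = φ ξ := by
  set V := Submodule.span ℂ
    (Set.range fun g : GL (Fin n) ℤ_[p] => fun ξ : Fin n → ℚ_[p] => φ (glAct p n g⁻¹ ξ))
  have : FiniteDimensional ℂ V := hfin
  obtain ⟨T, hT⟩ := V.exists_finset_forall_eval_eq_zero
  have hpt : ∀ η ∈ T, ∀ᶠ δ in 𝓝[>] (0 : ℝ), ∀ g : GL (Fin n) ℤ_[p],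
      IsNearOne δ g → φ (glAct p n g η) = φ η := by
    intro η _
    obtain ⟨r, hr, hφr⟩ :=
      Metric.eventually_nhds_iff.1 ((IsLocallyConstant.iff_eventually_eq φ).1 hφ η)
    have hδr : ∀ᶠ δ in 𝓝[>] (0 : ℝ), δ * ‖η‖ < r := nhdsWithin_le_nhds <|
      ((continuous_id.mul continuous_const).tendsto' 0 0 (zero_mul _)).eventually (gt_mem_nhds hr)
    filter_upwards [hδr, self_mem_nhdsWithin] with δ hδr hδ g hg
    exact hφr ((dist_eq_norm _ _).trans_lt ((norm_glAct_sub_self_le hδ.le hg η).trans_lt hδr))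
  filter_upwards [(eventually_all_finset T).2 hpt] with δ hδ g hg ξ
  have hmem : (fun ξ => φ (glAct p n g ξ)) - φ ∈ V :=
    sub_mem (Submodule.subset_span ⟨g⁻¹, by simp⟩)
      (Submodule.subset_span ⟨1, by simp [glAct_one]⟩)
  exact sub_eq_zero.1 (congrFun (hT _ hmem fun η hη => sub_eq_zero.2 (hδ η hη g hg)) ξ)

lemma Cminus.isLocallyConstant (hφ : φ ∈ Cminus p n) : IsLocallyConstant φ := by
  obtain ⟨⟨h0, hlc, -⟩, ε, hε, hsupp⟩ := hφ
  refine (IsLocallyConstant.iff_eventually_eq φ).2 fun ξ => ?_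
  rcases eq_or_ne ξ 0 with rfl | hξ
  · filter_upwards [ball_mem_nhds 0 hε] with η hη
    rw [h0]
    exact hsupp η (mem_ball_zero_iff.1 hη)
  · obtain ⟨U, hU, hUc⟩ := hlc ξ hξ
    exact Filter.mem_of_superset hU hUc

lemma Cminus.exists_constantOnRelativeBalls (hφ : φ ∈ Cminus p n) :
    ∃ δ, 0 < δ ∧ δ < 1 ∧ ConstantOnRelativeBalls δ φ := by
  obtain ⟨δ, hinv, hδ₁, hδ₀⟩ :=
    ((hφ.1.2.2.eventually_forall_glAct_eq (Cminus.isLocallyConstant hφ)).and <|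
      ((eventually_lt_nhds zero_lt_one).filter_mono nhdsWithin_le_nhds).and
        self_mem_nhdsWithin).exists
  refine ⟨δ, hδ₀, hδ₁, fun ξ η hη => ?_⟩
  rcases eq_or_ne ξ 0 with rfl | hξ
  · rw [norm_zero, mul_zero, norm_le_zero_iff] at hη
    rw [hη, add_zero]
  · obtain ⟨g, hg, hgξ⟩ := exists_glAct_eq_add hξ hδ₁ hη
    rw [← hgξ, hinv g hg]

end KFinite

section Inversion

variable {p : ℕ} [Fact p.Prime] {n : ℕ} [MeasurableSpace ℚ_[p]] [BorelSpace ℚ_[p]]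
  {μ : Measure (Fin n → ℚ_[p])} [μ.IsAddHaarMeasure] {ψ : ℚ_[p] → ℂ}
  {φ : (Fin n → ℚ_[p]) → ℂ}

lemma IsFourierLimit.mul_char_sub_one_eq {g : (Fin n → ℚ_[p]) → ℂ}
    (hg : IsFourierLimit μ ψ φ g) (hψ : IsStdAddChar p ψ) (hφc : Continuous φ) {δ : ℝ}
    (hδ₀ : 0 < δ) (hδ₁ : δ ≤ 1) (hφ : ConstantOnRelativeBalls δ φ) {ξ₀ : Fin n → ℚ_[p]}
    {K : ℝ} (hK : p * ‖ξ₀‖ ≤ δ * K) {x : Fin n → ℚ_[p]} (hx : x ≠ 0) :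
    g x * (ψ (-(ξ₀ ⬝ᵥ x)) - 1) = partialFourier μ ψ φ K x * (ψ (-(ξ₀ ⬝ᵥ x)) - 1) := by
  by_cases hsmall : ‖ξ₀‖ * ‖x‖ ≤ 1
  · rw [hψ.map_eq_one ((norm_neg _).trans_le ((norm_dotProduct_le ξ₀ x).trans hsmall)),
      sub_self, mul_zero, mul_zero]
  · obtain ⟨R, hgR, hKR⟩ :=
      ((hg.eventually_eq_partialFourier hx).and (eventually_ge_atTop K)).exists
    rw [hgR, partialFourier_eq_of_le hψ hφc hδ₀ hδ₁ hφ hKR]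
    calc (p : ℝ) ≤ p * (‖ξ₀‖ * ‖x‖) :=
          le_mul_of_one_le_right (Nat.cast_nonneg p) (not_le.1 hsmall).le
      _ = p * ‖ξ₀‖ * ‖x‖ := by ring
      _ ≤ δ * K * ‖x‖ := by gcongr

/-- By Fubini the integral becomes `∫_{B(0,K)} φ(ξ) (𝟙(ξ - ξ₀) - 𝟙(ξ)) dξ` up to the factor
`μ(B(0, p^k))`, where `𝟙` is the indicator of the dual ball `B(0, p^{-k})`: the second term vanishes
as `φ = 0` there, and on the first `φ = φ(ξ₀)`. -/
lemma setIntegral_closedBall_partialFourier_mul (hψ : IsStdAddChar p ψ)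
    (hμ : μ (closedBall 0 1) = 1) (hφc : Continuous φ) {δ : ℝ} (hδ₁ : δ ≤ 1)
    (hφ : ConstantOnRelativeBalls δ φ) {ξ₀ : Fin n → ℚ_[p]} {K : ℝ} (hK : ‖ξ₀‖ ≤ K) {k : ℤ}
    (hkξ₀ : (p : ℝ) ^ (-k) ≤ δ * ‖ξ₀‖) (hφk : ∀ ξ ∈ closedBall 0 ((p : ℝ) ^ (-k)), φ ξ = 0) :
    ∫ x in closedBall 0 ((p : ℝ) ^ k), partialFourier μ ψ φ K x * (ψ (-(ξ₀ ⬝ᵥ x)) - 1) ∂μ =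
      φ ξ₀ := by
  set r := (p : ℝ) ^ k with hr
  set r' := (p : ℝ) ^ (-k) with hr'
  have hr'ξ₀ : r' ≤ ‖ξ₀‖ := hkξ₀.trans (mul_le_of_le_one_left (norm_nonneg _) hδ₁)
  have hsub : closedBall ξ₀ r' ⊆ closedBall 0 K := fun ξ hξ => by
    rw [mem_closedBall, dist_eq_norm] at hξ
    rw [mem_closedBall_zero_iff, ← sub_add_cancel ξ ξ₀]
    exact (IsUltrametricDist.norm_add_le_max _ _).trans (max_le (hξ.trans (hr'ξ₀.trans hK)) hK)
  have hchar : ∀ η : Fin n → ℚ_[p], IntegrableOn (fun x => ψ (η ⬝ᵥ x)) (closedBall 0 r) μ :=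
    fun η => (hψ.continuous.comp (continuous_const.dotProduct continuous_id)).continuousOn
      |>.integrableOn_compact (isCompact_closedBall 0 r)
  have hinner : ∀ ξ, ∫ x in closedBall 0 r, (ψ ((ξ - ξ₀) ⬝ᵥ x) - ψ (ξ ⬝ᵥ x)) * φ ξ ∂μ =
      (closedBall ξ₀ r').indicator (fun _ => (μ.real (closedBall 0 r) : ℂ) * φ ξ₀) ξ := by
    intro ξ
    rw [integral_mul_const, integral_sub (hchar _) (hchar _), hψ.setIntegral_closedBall_zpow,
      hψ.setIntegral_closedBall_zpow, ← hr, ← hr']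
    have h₀ : ξ - ξ₀ ∈ closedBall 0 r' ↔ ξ ∈ closedBall ξ₀ r' := by
      rw [mem_closedBall_zero_iff, mem_closedBall, dist_eq_norm]
    have hφξ₀ : ξ ∈ closedBall ξ₀ r' → φ ξ = φ ξ₀ := fun h => by
      rw [mem_closedBall, dist_eq_norm] at h
      simpa using hφ ξ₀ (ξ - ξ₀) (h.trans hkξ₀)
    classical
    simp only [Set.indicator_apply, h₀]
    by_cases h₁ : ξ ∈ closedBall ξ₀ r' <;> by_cases h₂ : ξ ∈ closedBall 0 r' <;>
      simp [h₁, h₂, hφk ξ, hφξ₀]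
    exact Or.inr ((hφξ₀ h₁).symm.trans (hφk ξ h₂))
  have hint : Integrable (Function.uncurry fun x ξ => (ψ ((ξ - ξ₀) ⬝ᵥ x) - ψ (ξ ⬝ᵥ x)) * φ ξ)
      ((μ.restrict (closedBall 0 r)).prod (μ.restrict (closedBall 0 K))) := by
    rw [Measure.prod_restrict]
    exact (((hψ.continuous.comp ((continuous_snd.sub continuous_const).dotProduct
      continuous_fst)).sub (hψ.continuous.comp (continuous_snd.dotProduct continuous_fst))).mul
        (hφc.comp continuous_snd)).continuousOn.integrableOn_compact
          ((isCompact_closedBall 0 r).prod (isCompact_closedBall 0 K))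
  calc ∫ x in closedBall 0 r, partialFourier μ ψ φ K x * (ψ (-(ξ₀ ⬝ᵥ x)) - 1) ∂μ
      = ∫ x in closedBall 0 r, ∫ ξ in closedBall 0 K,
          (ψ ((ξ - ξ₀) ⬝ᵥ x) - ψ (ξ ⬝ᵥ x)) * φ ξ ∂μ ∂μ := by
        simp_rw [partialFourier_mul_char_sub_one hψ]
    _ = ∫ ξ in closedBall 0 K, ∫ x in closedBall 0 r,
          (ψ ((ξ - ξ₀) ⬝ᵥ x) - ψ (ξ ⬝ᵥ x)) * φ ξ ∂μ ∂μ := integral_integral_swap hint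
    _ = (μ.real (closedBall 0 r) * μ.real (closedBall 0 r') : ℝ) * φ ξ₀ := by
        simp_rw [hinner]
        rw [integral_indicator_const _ measurableSet_closedBall,
          measureReal_restrict_apply measurableSet_closedBall, Set.inter_eq_left.2 hsub,
          Measure.addHaar_real_closedBall_center, Complex.real_smul]
        push_cast
        ring
    _ = φ ξ₀ := by rw [measureReal_closedBall_zpow_mul_neg hμ, Complex.ofReal_one, one_mul]

/-- `partialFourier μ ψ φ K` vanishes outside a ball because `φ` vanishes near `0`, so the
integral can be computed on a ball `B(0, p^k)` with `k` large. -/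
lemma integrable_partialFourier_mul_and_integral_eq (hψ : IsStdAddChar p ψ)
    (hμ : μ (closedBall 0 1) = 1) (hφc : Continuous φ) {δ : ℝ} (hδ₀ : 0 < δ) (hδ₁ : δ ≤ 1)
    (hφ : ConstantOnRelativeBalls δ φ) {ε : ℝ} (hε : 0 < ε)
    (hsupp : ∀ ξ : Fin n → ℚ_[p], ‖ξ‖ < ε → φ ξ = 0) {ξ₀ : Fin n → ℚ_[p]} (hξ₀ : ξ₀ ≠ 0)
    {K : ℝ} (hK : ‖ξ₀‖ ≤ K) :
    Integrable (fun x => partialFourier μ ψ φ K x * (ψ (-(ξ₀ ⬝ᵥ x)) - 1)) μ ∧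
      ∫ x, partialFourier μ ψ φ K x * (ψ (-(ξ₀ ⬝ᵥ x)) - 1) ∂μ = φ ξ₀ := by
  set s := min (ε / 2) K
  have hs : 0 < s := lt_min (half_pos hε) ((norm_pos_iff.2 hξ₀).trans_le hK)
  have hφs : ∀ ξ ∈ closedBall 0 s, φ ξ = 0 := fun ξ hξ => hsupp ξ <|
    (mem_closedBall_zero_iff.1 hξ).trans_lt ((min_le_left _ _).trans_lt (half_lt_self hε))
  have hp : Tendsto (fun k : ℕ => (p : ℝ) ^ (k : ℤ)) atTop atTop := by
    simpa only [zpow_natCast] using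
      tendsto_pow_atTop_atTop_of_one_lt (Nat.one_lt_cast.2 (Fact.out : p.Prime).one_lt)
  have hp' : Tendsto (fun k : ℕ => (p : ℝ) ^ (-(k : ℤ))) atTop (𝓝 0) :=
    hp.inv_tendsto_atTop.congr fun k => (zpow_neg (p : ℝ) k).symm
  obtain ⟨k, hk₁, hk₂, hk₃⟩ := ((hp.eventually_ge_atTop (p / (δ * s))).and
    ((hp'.eventually (ge_mem_nhds (by positivity : 0 < δ * ‖ξ₀‖))).and
      (hp'.eventually (gt_mem_nhds hε)))).exists
  have hvanish : ∀ x ∉ closedBall 0 ((p : ℝ) ^ (k : ℤ)),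
      partialFourier μ ψ φ K x * (ψ (-(ξ₀ ⬝ᵥ x)) - 1) = 0 := fun x hx => by
    rw [partialFourier_eq_zero hψ hφc hδ₀ hδ₁ hφ hφs (min_le_right _ _), zero_mul]
    rw [mem_closedBall_zero_iff, not_le] at hx
    rw [div_le_iff₀ (by positivity)] at hk₁
    nlinarith [mul_pos hδ₀ hs]
  have hcont : Continuous fun x => partialFourier μ ψ φ K x * (ψ (-(ξ₀ ⬝ᵥ x)) - 1) :=
    (continuous_partialFourier hψ hφc K).mul
      ((hψ.continuous.comp (continuous_const.dotProduct continuous_id).neg).sub continuous_const)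
  refine ⟨hcont.integrable_of_hasCompactSupport
    (HasCompactSupport.intro (isCompact_closedBall 0 _) hvanish), ?_⟩
  rw [← setIntegral_eq_integral_of_forall_compl_eq_zero hvanish]
  exact setIntegral_closedBall_partialFourier_mul hψ hμ hφc hδ₁ hφ hK hk₂
    fun ξ hξ => hsupp ξ ((mem_closedBall_zero_iff.1 hξ).trans_lt hk₃)

end Inversion

theorem stmt_6_general (p : ℕ) [Fact p.Prime] (n : ℕ)
    [MeasurableSpace ℚ_[p]] [BorelSpace ℚ_[p]]
    (μ : Measure (Fin n → ℚ_[p])) [μ.IsAddHaarMeasure]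
    (hμ : μ (Metric.closedBall 0 1) = 1)
    (ψ : ℚ_[p] → ℂ) (hψ : IsStdAddChar p ψ)
    (φ : (Fin n → ℚ_[p]) → ℂ) (hφ : φ ∈ Cminus p n)
    (g : (Fin n → ℚ_[p]) → ℂ)
    (hg : ∀ x : Fin n → ℚ_[p], x ≠ 0 →
      ∃ Λ₀ : AddSubgroup (Fin n → ℚ_[p]),
        IsCompact (Λ₀ : Set (Fin n → ℚ_[p])) ∧ IsOpen (Λ₀ : Set (Fin n → ℚ_[p])) ∧
        ∀ Λ : AddSubgroup (Fin n → ℚ_[p]),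
          IsCompact (Λ : Set (Fin n → ℚ_[p])) → IsOpen (Λ : Set (Fin n → ℚ_[p])) → Λ₀ ≤ Λ →
            g x = ∫ ξ in (Λ : Set (Fin n → ℚ_[p])), ψ (∑ i, ξ i * x i) * φ ξ ∂μ) :
    ∀ ξ₀ : Fin n → ℚ_[p], ξ₀ ≠ 0 →
      IntegrableOn (fun x : Fin n → ℚ_[p] => g x * (ψ (-(∑ i, ξ₀ i * x i)) - 1))
        {x : Fin n → ℚ_[p] | x ≠ 0} μ ∧
      ∫ x in {x : Fin n → ℚ_[p] | x ≠ 0}, g x * (ψ (-(∑ i, ξ₀ i * x i)) - 1) ∂μ = φ ξ₀ := by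
  intro ξ₀ hξ₀
  obtain ⟨δ, hδ₀, hδ₁, hφδ⟩ := Cminus.exists_constantOnRelativeBalls hφ
  obtain ⟨ε, hε, hsupp⟩ := hφ.2
  have hφc : Continuous φ := (Cminus.isLocallyConstant hφ).continuous
  set K := p * ‖ξ₀‖ / δ
  have hK : ‖ξ₀‖ ≤ K := by
    rw [le_div_iff₀ hδ₀]
    have : (1 : ℝ) ≤ p := Nat.one_le_cast.2 (Fact.out : p.Prime).one_lt.le
    nlinarith [norm_nonneg ξ₀]
  have hgK : ∀ x ∈ {x : Fin n → ℚ_[p] | x ≠ 0}, g x * (ψ (-(∑ i, ξ₀ i * x i)) - 1) =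
      partialFourier μ ψ φ K x * (ψ (-(ξ₀ ⬝ᵥ x)) - 1) := fun x hx =>
    IsFourierLimit.mul_char_sub_one_eq hg hψ hφc hδ₀ hδ₁.le hφδ
      (mul_div_cancel₀ _ hδ₀.ne').ge hx
  obtain ⟨hint, hintegral⟩ := integrable_partialFourier_mul_and_integral_eq hψ hμ hφc hδ₀ hδ₁.le
    hφδ hε hsupp hξ₀ hK
  have hmeas : MeasurableSet {x : Fin n → ℚ_[p] | x ≠ 0} := (measurableSet_singleton 0).compl
  have hμ₀ : μ.restrict {x : Fin n → ℚ_[p] | x ≠ 0} = μ := by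
    have : Nonempty (Fin n) := ⟨(Function.ne_iff.1 hξ₀).choose⟩
    have := Module.punctured_nhds_neBot ℚ_[p] (Fin n → ℚ_[p]) 0
    exact restrict_compl_singleton 0
  refine ⟨hint.integrableOn.congr_fun (fun x hx => (hgK x hx).symm) hmeas, ?_⟩
  rw [setIntegral_congr_fun hmeas hgK, hμ₀, hintegral]

theorem stmt_6 (p : ℕ) [Fact p.Prime] (n : ℕ) (hn : 2 ≤ n)
    [MeasurableSpace ℚ_[p]] [BorelSpace ℚ_[p]]
    (μ : Measure (Fin n → ℚ_[p])) [μ.IsAddHaarMeasure]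
    (hμ : μ (Metric.closedBall 0 1) = 1)
    (ψ : ℚ_[p] → ℂ) (hψ : IsStdAddChar p ψ)
    (φ : (Fin n → ℚ_[p]) → ℂ) (hφ : φ ∈ Cminus p n)
    (g : (Fin n → ℚ_[p]) → ℂ)
    (hg : ∀ x : Fin n → ℚ_[p], x ≠ 0 →
      ∃ Λ₀ : AddSubgroup (Fin n → ℚ_[p]),
        IsCompact (Λ₀ : Set (Fin n → ℚ_[p])) ∧ IsOpen (Λ₀ : Set (Fin n → ℚ_[p])) ∧
        ∀ Λ : AddSubgroup (Fin n → ℚ_[p]),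
          IsCompact (Λ : Set (Fin n → ℚ_[p])) → IsOpen (Λ : Set (Fin n → ℚ_[p])) → Λ₀ ≤ Λ →
            g x = ∫ ξ in (Λ : Set (Fin n → ℚ_[p])), ψ (∑ i, ξ i * x i) * φ ξ ∂μ) :
    ∀ ξ₀ : Fin n → ℚ_[p], ξ₀ ≠ 0 →
      IntegrableOn (fun x : Fin n → ℚ_[p] => g x * (ψ (-(∑ i, ξ₀ i * x i)) - 1))
        {x : Fin n → ℚ_[p] | x ≠ 0} μ ∧
      ∫ x in {x : Fin n → ℚ_[p] | x ≠ 0}, g x * (ψ (-(∑ i, ξ₀ i * x i)) - 1) ∂μ = φ ξ₀ :=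
  stmt_6_general p n μ hμ ψ hψ φ hφ g hg
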